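/- Let G be a chain graph with binary string 0^{a_1}1^{a_2}…0^{a_{2h-1}}1^{a_{2h}} on n = a_1 + ⋯ + a_{2h} vertices and let M_S(G) denote the number of distinct eigenvalues of the Seidel matrix S(G). Then h + 1 ≤ M_S(G) ≤ 2h. -/

import Mathlib

open Matrix Polynomial

/-- Adjacency between cells of a chain graph: cell `k` (0-indexed) is a "zero"/white cell
when `k` is even and a "one"/black cell when `k` is odd; white cell `2i` is joined to
black cell `2j+1` iff `2i < 2j+1`. -/
def cellAdj {m : ℕ} (k l : Fin m) : Prop :=
  (Even (k : ℕ) ∧ Odd (l : ℕ) ∧ (k : ℕ) < l) ∨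
  (Even (l : ℕ) ∧ Odd (k : ℕ) ∧ (l : ℕ) < k)

instance {m : ℕ} (k l : Fin m) : Decidable (cellAdj k l) := by
  unfold cellAdj; infer_instance

/-- The chain graph with binary string `0^{a 0} 1^{a 1} ⋯ 0^{a (2h-2)} 1^{a (2h-1)}`. -/
def chainGraph (h : ℕ) (a : Fin (2 * h) → ℕ) :
    SimpleGraph (Σ k : Fin (2 * h), Fin (a k)) where
  Adj u v := cellAdj u.1 v.1
  symm := by
    constructor
    intro u v huv
    unfold cellAdj at *
    exact huv.symm
  loopless := by
    constructor
    intro u hu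
    rcases hu with ⟨_, _, hlt⟩ | ⟨_, _, hlt⟩ <;> exact lt_irrefl _ hlt

instance (h : ℕ) (a : Fin (2 * h) → ℕ) : DecidableRel (chainGraph h a).Adj :=
  fun u v => inferInstanceAs (Decidable (cellAdj u.1 v.1))

/-- Adjacency matrix (over ℝ) of the chain graph. -/
noncomputable def chainA (h : ℕ) (a : Fin (2 * h) → ℕ) :
    Matrix (Σ k : Fin (2 * h), Fin (a k)) (Σ k : Fin (2 * h), Fin (a k)) ℝ :=
  (chainGraph h a).adjMatrix ℝ

/-- Seidel matrix `J - I - 2A` of a graph. -/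
noncomputable def seidel {V : Type*} [Fintype V] [DecidableEq V]
    (G : SimpleGraph V) [DecidableRel G.Adj] : Matrix V V ℝ :=
  (Matrix.of fun _ _ => (1 : ℝ)) - 1 - (2 : ℝ) • G.adjMatrix ℝ

/-- Seidel matrix of the chain graph. -/
noncomputable def chainS (h : ℕ) (a : Fin (2 * h) → ℕ) :
    Matrix (Σ k : Fin (2 * h), Fin (a k)) (Σ k : Fin (2 * h), Fin (a k)) ℝ :=
  seidel (chainGraph h a)

/-- Quotient adjacency matrix `Ã(G)` of the chain graph. -/
noncomputable def quotA (h : ℕ) (a : Fin (2 * h) → ℕ) :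
    Matrix (Fin (2 * h)) (Fin (2 * h)) ℝ :=
  Matrix.of fun k l => if cellAdj k l then (a l : ℝ) else 0

/-- Quotient Seidel matrix `S̃(G)` of the chain graph. -/
noncomputable def quotS (h : ℕ) (a : Fin (2 * h) → ℕ) :
    Matrix (Fin (2 * h)) (Fin (2 * h)) ℝ :=
  Matrix.of fun k l =>
    if k = l then (a k : ℝ) - 1 else if cellAdj k l then -(a l : ℝ) else (a l : ℝ)

section Gen

variable {n : Type*} [Fintype n] [DecidableEq n] {R : Type*} [CommRing R]

lemma my_charpoly_conj (U D W : Matrix n n R) (hUW : U * W = 1) (hWU : W * U = 1) :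
    (U * D * W).charpoly = D.charpoly := by
  have hcm : U.map C * charmatrix D * W.map C = charmatrix (U * D * W) := by
    rw [charmatrix, charmatrix, Matrix.mul_sub, Matrix.sub_mul]
    congr 1
    · rw [scalar_apply, ← Matrix.smul_one_eq_diagonal, Matrix.mul_smul, Matrix.smul_mul,
        mul_one, ← Matrix.map_mul, hUW]
      simp
    · simp only [RingHom.mapMatrix_apply, ← Matrix.map_mul]
  rw [Matrix.charpoly, ← hcm, det_mul, det_mul, Matrix.charpoly, mul_comm (det (U.map C)),
    mul_assoc, ← det_mul, ← Matrix.map_mul, hUW]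
  simp

lemma my_charpoly_diagonal (d : n → R) :
    (diagonal d).charpoly = ∏ i, (X - C (d i)) := by
  rw [Matrix.charpoly, charmatrix, scalar_apply, RingHom.mapMatrix_apply,
    Matrix.diagonal_map (by simp : C (0:R) = 0), diagonal_sub, det_diagonal]

lemma my_charpoly_hermitian {A : Matrix n n ℝ} (hA : A.IsHermitian) :
    A.charpoly = ∏ i, (X - C (hA.eigenvalues i)) := by
  have hspec := hA.spectral_theorem
  have h1 : (hA.eigenvectorUnitary : Matrix n n ℝ) * (star hA.eigenvectorUnitary : Matrix n n ℝ) = 1 := by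
    simpa using hA.eigenvectorUnitary.2.2
  have h2 : (star hA.eigenvectorUnitary : Matrix n n ℝ) * (hA.eigenvectorUnitary : Matrix n n ℝ) = 1 := by
    simpa using hA.eigenvectorUnitary.2.1
  calc A.charpoly = ((hA.eigenvectorUnitary : Matrix n n ℝ) * diagonal (RCLike.ofReal ∘ hA.eigenvalues) * (star hA.eigenvectorUnitary : Matrix n n ℝ)).charpoly := by rw [Unitary.conjStarAlgAut_apply] at hspec; conv_lhs => rw [hspec]
    _ = (diagonal (RCLike.ofReal ∘ hA.eigenvalues)).charpoly := my_charpoly_conj _ _ _ h1 h2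
    _ = ∏ i, (X - C (hA.eigenvalues i)) := my_charpoly_diagonal _

lemma my_roots_charpoly {A : Matrix n n ℝ} (hA : A.IsHermitian) :
    A.charpoly.roots = Finset.univ.val.map hA.eigenvalues := by
  rw [my_charpoly_hermitian hA]
  have : (∏ i, (X - C (hA.eigenvalues i))) =
      ((Finset.univ.val.map hA.eigenvalues).map fun a => X - C a).prod := by
    rw [Multiset.map_map]; rfl
  rw [this, roots_multiset_prod_X_sub_C]

noncomputable def herBasis {A : Matrix n n ℝ} (hA : A.IsHermitian) : Module.Basis n ℝ (n → ℝ) :=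
  hA.eigenvectorBasis.toBasis.map (WithLp.linearEquiv 2 ℝ (n → ℝ))

lemma herBasis_mulVec {A : Matrix n n ℝ} (hA : A.IsHermitian) (i : n) :
    A *ᵥ herBasis hA i = hA.eigenvalues i • herBasis hA i := by
  have := hA.mulVec_eigenvectorBasis i
  simpa [herBasis] using this

lemma count_eq_nullity {A : Matrix n n ℝ} (hA : A.IsHermitian) (μ : ℝ) :
    (Finset.univ.filter fun i => hA.eigenvalues i = μ).card
      = Module.finrank ℝ (LinearMap.ker (A - μ • (1 : Matrix n n ℝ)).mulVecLin) := by
  set bas := herBasis hA with hbas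
  set K := LinearMap.ker (A - μ • (1 : Matrix n n ℝ)).mulVecLin with hK
  have hker : ∀ x : n → ℝ, x ∈ K ↔ A *ᵥ x = μ • x := by
    intro x
    rw [hK, LinearMap.mem_ker, Matrix.mulVecLin_apply, Matrix.sub_mulVec,
      Matrix.smul_mulVec, Matrix.one_mulVec, sub_eq_zero]
  apply le_antisymm
  · -- card ≤ finrank
    have hmem : ∀ i : {i // hA.eigenvalues i = μ}, bas i.1 ∈ K := by
      intro i
      rw [hker, herBasis_mulVec hA, i.2]
    have li : LinearIndependent ℝ (fun i : {i // hA.eigenvalues i = μ} => (⟨bas i.1, hmem i⟩ : K)) := by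
      apply LinearIndependent.of_comp K.subtype
      exact bas.linearIndependent.comp Subtype.val Subtype.val_injective
    have := li.fintype_card_le_finrank
    rwa [Fintype.card_subtype] at this
  · -- finrank ≤ card
    set s := Finset.univ.filter fun i => hA.eigenvalues i = μ with hs
    have hle : K ≤ Submodule.span ℝ (s.image bas : Set (n → ℝ)) := by
      intro x hx
      rw [hker] at hx
      set c := bas.repr x with hc
      have hsum : ∑ i, c i • bas i = x := bas.sum_repr x
      have hAx : A *ᵥ x = ∑ i, (hA.eigenvalues i * c i) • bas i := by
        conv_lhs => rw [← hsum]
        rw [show A *ᵥ (∑ i, c i • bas i) = A.mulVecLin (∑ i, c i • bas i) from rfl, map_sum]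
        refine Finset.sum_congr rfl fun i _ => ?_
        rw [Matrix.mulVecLin_apply, Matrix.mulVec_smul, herBasis_mulVec hA, ← hbas,
          smul_smul, mul_comm]
      have hμx : μ • x = ∑ i, (μ * c i) • bas i := by
        conv_lhs => rw [← hsum]
        rw [Finset.smul_sum]
        refine Finset.sum_congr rfl fun i _ => by rw [smul_smul]
      have hsum0 : ∑ i, ((hA.eigenvalues i - μ) * c i) • bas i = 0 := by
        have heq : ∑ i, (hA.eigenvalues i * c i) • bas i = ∑ i, (μ * c i) • bas i :=
          hAx.symm.trans (hx.trans hμx)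
        have : ∑ i, ((hA.eigenvalues i - μ) * c i) • bas i
            = (∑ i, (hA.eigenvalues i * c i) • bas i) - ∑ i, (μ * c i) • bas i := by
          rw [← Finset.sum_sub_distrib]
          refine Finset.sum_congr rfl fun i _ => ?_
          rw [← sub_smul, sub_mul]
        rw [this, heq, sub_self]
      have hzero : ∀ j, hA.eigenvalues j ≠ μ → c j = 0 := by
        intro j hj
        have h0 := Fintype.linearIndependent_iff.1 bas.linearIndependent _ hsum0 j
        rcases mul_eq_zero.1 h0 with h | h
        · exact absurd (by linarith [sub_eq_zero.1 h] : hA.eigenvalues j = μ) hj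
        · exact h
      have hxs : x = ∑ i ∈ s, c i • bas i := by
        rw [← hsum]
        refine (Finset.sum_subset (Finset.subset_univ s) fun i _ hi => ?_).symm
        have : hA.eigenvalues i ≠ μ := by
          intro hcon; exact hi (by simp [hs, hcon])
        rw [hzero i this, zero_smul]
      rw [hxs]
      refine Submodule.sum_smul_mem _ _ fun i hi => ?_
      exact Submodule.subset_span (Finset.mem_coe.2 (Finset.mem_image_of_mem bas hi))
    calc Module.finrank ℝ K ≤ Module.finrank ℝ (Submodule.span ℝ (s.image bas : Set (n → ℝ))) :=
          Submodule.finrank_mono hle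
      _ ≤ (s.image bas).card := finrank_span_finset_le_card _
      _ ≤ s.card := Finset.card_image_le

end Gen

section CellFacts

lemma cellAdj_iff {m : ℕ} (k l : Fin m) :
    cellAdj k l ↔ ((k:ℕ)%2=0 ∧ (l:ℕ)%2=1 ∧ (k:ℕ)<(l:ℕ)) ∨
      ((l:ℕ)%2=0 ∧ (k:ℕ)%2=1 ∧ (l:ℕ)<(k:ℕ)) := by
  unfold cellAdj
  rw [Nat.even_iff, Nat.even_iff, Nat.odd_iff, Nat.odd_iff]

lemma cellAdj_irrefl {m : ℕ} (k : Fin m) : ¬ cellAdj k k := by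
  rw [cellAdj_iff]; omega

variable {h : ℕ} (a : Fin (2*h) → ℕ)

/-- sign matrix of the half graph -/
noncomputable def sigMat (h : ℕ) : Matrix (Fin (2*h)) (Fin (2*h)) ℝ :=
  Matrix.of fun k l => if cellAdj k l then -1 else 1

lemma sigMat_apply (k l : Fin (2*h)) :
    sigMat h k l = if cellAdj k l then -1 else 1 := rfl

lemma quotS_eq_sig (k l : Fin (2*h)) :
    quotS h a k l = sigMat h k l * (a l : ℝ) - (if k = l then 1 else 0) := by
  rw [quotS, sigMat_apply]
  by_cases hkl : k = l
  · subst hkl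
    simp [cellAdj_irrefl k]
  · simp only [Matrix.of_apply, if_neg hkl]
    split_ifs <;> ring

lemma chainS_add_one_apply (u v : Σ k : Fin (2*h), Fin (a k)) :
    (chainS h a + 1) u v = sigMat h u.1 v.1 := by
  rw [chainS, seidel, sigMat_apply]
  have hA : (chainGraph h a).adjMatrix ℝ u v = if cellAdj u.1 v.1 then 1 else 0 := by
    rw [SimpleGraph.adjMatrix_apply]
    rfl
  simp only [Matrix.add_apply, Matrix.sub_apply, Matrix.smul_apply, Matrix.of_apply, hA,
    Matrix.one_apply, smul_eq_mul]
  split_ifs <;> ring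

lemma chainS_apply (u v : Σ k : Fin (2*h), Fin (a k)) :
    chainS h a u v = sigMat h u.1 v.1 - (if u = v then 1 else 0) := by
  have := chainS_add_one_apply a u v
  rw [Matrix.add_apply, Matrix.one_apply] at this
  linarith [this]

lemma chainS_isHermitian : (chainS h a).IsHermitian := by
  refine Matrix.IsHermitian.ext fun u v => ?_
  rw [star_trivial, chainS_apply, chainS_apply, sigMat_apply, sigMat_apply]
  have : cellAdj v.1 u.1 ↔ cellAdj u.1 v.1 := by unfold cellAdj; tauto
  congr 1
  · exact if_congr this rfl rfl
  · exact if_congr eq_comm rfl rfl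

end CellFacts

section SigKer
variable {h : ℕ}

lemma mulVec_apply' {n : Type*} [Fintype n] (M : Matrix n n ℝ) (v : n → ℝ) (i : n) :
    (M *ᵥ v) i = ∑ j, M i j * v j := rfl

lemma sig_row_diff (k l : ℕ) (hk : k + 2 < 2*h) (hl : l < 2*h) (hlk : l ≠ k+1) :
    sigMat h ⟨k, by omega⟩ ⟨l, hl⟩ = sigMat h ⟨k+2, hk⟩ ⟨l, hl⟩ := by
  rw [sigMat_apply, sigMat_apply]
  refine if_congr ?_ rfl rfl
  rw [cellAdj_iff, cellAdj_iff]
  simp only [Fin.val_mk, Nat.zero_mod, Nat.mod_self, true_and, false_and, and_false, and_true, false_or, or_false, true_or, or_true]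
  omega

lemma cellAdj_succ (k : ℕ) (hk : k + 1 < 2*h) (hk2 : k < 2*h) :
    cellAdj (⟨k, hk2⟩ : Fin (2*h)) ⟨k+1, hk⟩ ↔ k % 2 = 0 := by
  rw [cellAdj_iff]; simp only [Fin.val_mk, Nat.zero_mod, Nat.mod_self, true_and, false_and, and_false, and_true, false_or, or_false, true_or, or_true]; omega

lemma cellAdj_succ' (k : ℕ) (hk : k + 2 < 2*h) :
    cellAdj (⟨k+2, hk⟩ : Fin (2*h)) ⟨k+1, by omega⟩ ↔ k % 2 = 1 := by
  rw [cellAdj_iff]; simp only [Fin.val_mk, Nat.zero_mod, Nat.mod_self, true_and, false_and, and_false, and_true, false_or, or_false, true_or, or_true]; omega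

lemma sig_ker_inner (v : Fin (2*h) → ℝ) (hv : sigMat h *ᵥ v = 0)
    (k : ℕ) (hk : k + 2 < 2*h) : v ⟨k+1, by omega⟩ = 0 := by
  have h1 : ∑ l, sigMat h ⟨k, by omega⟩ l * v l = 0 := by
    rw [← mulVec_apply', hv]; rfl
  have h2 : ∑ l, sigMat h ⟨k+2, hk⟩ l * v l = 0 := by
    rw [← mulVec_apply', hv]; rfl
  have h3 : ∑ l, (sigMat h ⟨k, by omega⟩ l - sigMat h ⟨k+2, hk⟩ l) * v l = 0 := by
    have : ∀ l, (sigMat h ⟨k, by omega⟩ l - sigMat h ⟨k+2, hk⟩ l) * v l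
        = sigMat h ⟨k, by omega⟩ l * v l - sigMat h ⟨k+2, hk⟩ l * v l := fun l => by ring
    rw [Finset.sum_congr rfl fun l _ => this l, Finset.sum_sub_distrib, h1, h2, sub_zero]
  have h4 : ∑ l, (sigMat h ⟨k, by omega⟩ l - sigMat h ⟨k+2, hk⟩ l) * v l
      = (sigMat h ⟨k, by omega⟩ ⟨k+1, by omega⟩ - sigMat h ⟨k+2, hk⟩ ⟨k+1, by omega⟩)
        * v ⟨k+1, by omega⟩ := by
    refine Finset.sum_eq_single _ (fun l _ hne => ?_) (fun habs => absurd (Finset.mem_univ _) habs)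
    have hlne : (l : ℕ) ≠ k+1 := fun hc => hne (Fin.ext hc)
    rw [show l = (⟨(l:ℕ), l.isLt⟩ : Fin (2*h)) from Fin.ext rfl,
      sig_row_diff k (l:ℕ) hk l.isLt hlne, sub_self, zero_mul]
  rw [h4] at h3
  rw [sigMat_apply, sigMat_apply] at h3
  rcases Nat.even_or_odd k with hpar | hpar
  · rw [Nat.even_iff] at hpar
    rw [if_pos ((cellAdj_succ k (by omega) (by omega)).2 hpar),
      if_neg (fun hc => by have := (cellAdj_succ' k hk).1 hc; omega)] at h3
    linarith
  · rw [Nat.odd_iff] at hpar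
    rw [if_neg (fun hc => by have := (cellAdj_succ k (by omega) (by omega)).1 hc; omega),
      if_pos ((cellAdj_succ' k hk).2 hpar)] at h3
    linarith

/-- null vector of the sign matrix -/
noncomputable def wVec (h : ℕ) : Fin (2*h) → ℝ :=
  fun k => if (k:ℕ) = 0 ∨ (k:ℕ) = 2*h-1 then 1 else 0

lemma wVec_ne_zero (hh : 1 ≤ h) : wVec h ≠ 0 := by
  intro hc
  have := congrFun hc ⟨0, by omega⟩
  simp [wVec] at this

lemma sum_two_support {f : Fin (2*h) → ℝ} (hh : 1 ≤ h)
    (hsupp : ∀ l : Fin (2*h), (l:ℕ) ≠ 0 → (l:ℕ) ≠ 2*h-1 → f l = 0) :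
    ∑ l, f l = f ⟨0, by omega⟩ + f ⟨2*h-1, by omega⟩ := by
  have h01 : (⟨0, by omega⟩ : Fin (2*h)) ≠ ⟨2*h-1, by omega⟩ := by
    intro hc; rw [Fin.ext_iff] at hc; simp at hc; omega
  rw [← Finset.sum_subset (Finset.subset_univ {⟨0, by omega⟩, ⟨2*h-1, by omega⟩})
      (fun l _ hl => ?_)]
  · rw [Finset.sum_insert (by simp [h01]), Finset.sum_singleton]
  · simp only [Finset.mem_insert, Finset.mem_singleton] at hl
    push_neg at hl
    exact hsupp l (fun hc => hl.1 (Fin.ext hc)) (fun hc => hl.2 (Fin.ext hc))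

lemma cellAdj_zero (hh : 1 ≤ h) (k : Fin (2*h)) :
    cellAdj k (⟨0, by omega⟩ : Fin (2*h)) ↔ (k:ℕ) % 2 = 1 := by
  rw [cellAdj_iff]; simp only [Fin.val_mk, Nat.zero_mod, Nat.mod_self, true_and, false_and, and_false, and_true, false_or, or_false, true_or, or_true]; omega

lemma cellAdj_last (hh : 1 ≤ h) (k : Fin (2*h)) :
    cellAdj k (⟨2*h-1, by omega⟩ : Fin (2*h)) ↔ (k:ℕ) % 2 = 0 := by
  rw [cellAdj_iff]; simp only [Fin.val_mk, Nat.zero_mod, Nat.mod_self, true_and, false_and, and_false, and_true, false_or, or_false, true_or, or_true]; omega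

lemma sig_mulVec_wVec (hh : 1 ≤ h) : sigMat h *ᵥ wVec h = 0 := by
  funext k
  rw [mulVec_apply']
  have : ∑ l, sigMat h k l * wVec h l
      = sigMat h k ⟨0, by omega⟩ * wVec h ⟨0, by omega⟩
        + sigMat h k ⟨2*h-1, by omega⟩ * wVec h ⟨2*h-1, by omega⟩ :=
    sum_two_support hh (fun l h1 h2 => by rw [show wVec h l = 0 from if_neg (by omega), mul_zero])
  rw [this]
  have hw0 : wVec h ⟨0, by omega⟩ = 1 := if_pos (by simp)
  have hw1 : wVec h ⟨2*h-1, by omega⟩ = 1 := if_pos (by simp)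
  rw [hw0, hw1, sigMat_apply, sigMat_apply]
  rcases Nat.even_or_odd (k:ℕ) with hpar | hpar
  · rw [Nat.even_iff] at hpar
    rw [if_neg (fun hc => by rw [cellAdj_zero hh] at hc; omega),
      if_pos ((cellAdj_last hh k).2 hpar)]
    simp
  · rw [Nat.odd_iff] at hpar
    rw [if_pos ((cellAdj_zero hh k).2 hpar),
      if_neg (fun hc => by rw [cellAdj_last hh] at hc; omega)]
    simp

lemma sig_ker_le (hh : 1 ≤ h) (v : Fin (2*h) → ℝ) (hv : sigMat h *ᵥ v = 0) :
    v = v ⟨0, by omega⟩ • wVec h := by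
  have hinner : ∀ j : ℕ, 0 < j → j < 2*h-1 → ∀ (hj : j < 2*h), v ⟨j, hj⟩ = 0 := by
    intro j hj0 hj1 hj
    have hk : (j-1) + 2 < 2*h := by omega
    have := sig_ker_inner v hv (j-1) hk
    rwa [show (⟨(j-1)+1, by omega⟩ : Fin (2*h)) = ⟨j, hj⟩ from Fin.ext (by simp only [Fin.val_mk]; omega)] at this
  have hlast : v ⟨2*h-1, by omega⟩ = v ⟨0, by omega⟩ := by
    have hrow : ∑ l, sigMat h ⟨2*h-1, by omega⟩ l * v l = 0 := by
      rw [← mulVec_apply', hv]; rfl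
    have hsum : ∑ l, sigMat h ⟨2*h-1, by omega⟩ l * v l
        = sigMat h ⟨2*h-1, by omega⟩ ⟨0, by omega⟩ * v ⟨0, by omega⟩
          + sigMat h ⟨2*h-1, by omega⟩ ⟨2*h-1, by omega⟩ * v ⟨2*h-1, by omega⟩ :=
      sum_two_support hh (fun l h1 h2 => by
        rw [show v l = 0 from by
          have := hinner (l:ℕ) (by omega) (by omega) l.isLt
          exact this, mul_zero])
    rw [hsum, sigMat_apply, sigMat_apply,
      if_pos ((cellAdj_zero hh _).2 (by simp only [Fin.val_mk, Nat.zero_mod, Nat.mod_self, true_and, false_and, and_false, and_true, false_or, or_false, true_or, or_true]; omega)),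
      if_neg (cellAdj_irrefl _)] at hrow
    linarith
  funext l
  simp only [Pi.smul_apply, wVec, smul_eq_mul]
  by_cases hl0 : (l:ℕ) = 0
  · rw [if_pos (Or.inl hl0), mul_one]
    congr 1
    exact Fin.ext hl0
  · by_cases hl1 : (l:ℕ) = 2*h-1
    · rw [if_pos (Or.inr hl1), mul_one, show l = ⟨2*h-1, by omega⟩ from Fin.ext hl1, hlast]
    · rw [if_neg (by tauto), mul_zero]
      have := hinner (l:ℕ) (by omega) (by omega) l.isLt
      exact this

lemma sig_ker_finrank (hh : 1 ≤ h) :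
    Module.finrank ℝ (LinearMap.ker (sigMat h).mulVecLin) = 1 := by
  have hker : LinearMap.ker (sigMat h).mulVecLin = Submodule.span ℝ {wVec h} := by
    apply le_antisymm
    · intro v hv
      rw [LinearMap.mem_ker, Matrix.mulVecLin_apply] at hv
      rw [sig_ker_le hh v hv]
      exact Submodule.smul_mem _ _ (Submodule.mem_span_singleton_self _)
    · rw [Submodule.span_le, Set.singleton_subset_iff]
      rw [SetLike.mem_coe, LinearMap.mem_ker, Matrix.mulVecLin_apply]
      exact sig_mulVec_wVec hh
  rw [hker, finrank_span_singleton (wVec_ne_zero hh)]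

end SigKer

section Nullity
variable {h : ℕ} {a : Fin (2*h) → ℕ}

noncomputable def cellSumL (h : ℕ) (a : Fin (2*h) → ℕ) :
    ((Σ k : Fin (2*h), Fin (a k)) → ℝ) →ₗ[ℝ] (Fin (2*h) → ℝ) where
  toFun x := fun k => ∑ j, x ⟨k, j⟩
  map_add' x y := by funext k; simp [Finset.sum_add_distrib]
  map_smul' c x := by funext k; simp [Finset.mul_sum]

noncomputable def liftL (h : ℕ) (a : Fin (2*h) → ℕ) :
    (Fin (2*h) → ℝ) →ₗ[ℝ] ((Σ k : Fin (2*h), Fin (a k)) → ℝ) where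
  toFun y := fun u => y u.1
  map_add' x y := rfl
  map_smul' c x := rfl

lemma chainS_add_one_comp :
    (chainS h a + 1).mulVecLin
      = (liftL h a) ∘ₗ (sigMat h).mulVecLin ∘ₗ (cellSumL h a) := by
  apply LinearMap.ext
  intro x
  funext u
  simp only [Matrix.mulVecLin_apply, LinearMap.comp_apply, liftL, cellSumL, LinearMap.coe_mk,
    AddHom.coe_mk]
  rw [mulVec_apply', mulVec_apply']
  have : ∀ v : Σ k : Fin (2*h), Fin (a k), (chainS h a + 1) u v * x v
      = sigMat h u.1 v.1 * x v := fun v => by rw [chainS_add_one_apply]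
  rw [Finset.sum_congr rfl fun v _ => this v]
  rw [← Finset.univ_sigma_univ, Finset.sum_sigma]
  exact Finset.sum_congr rfl fun k _ => by rw [Finset.mul_sum]

lemma cellSumL_surj (ha : ∀ k, 1 ≤ a k) : Function.Surjective (cellSumL h a) := by
  intro y
  refine ⟨fun u => y u.1 / (a u.1 : ℝ), ?_⟩
  funext k
  have hk : ((a k : ℝ)) ≠ 0 := Nat.cast_ne_zero.2 (by have := ha k; omega)
  simp only [cellSumL, LinearMap.coe_mk, AddHom.coe_mk]
  rw [Finset.sum_const, Finset.card_univ, Fintype.card_fin, nsmul_eq_mul]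
  field_simp

lemma liftL_inj (ha : ∀ k, 1 ≤ a k) : Function.Injective (liftL h a) := by
  intro y z hyz
  funext k
  exact congrFun hyz ⟨k, ⟨0, ha k⟩⟩

lemma card_V : Fintype.card (Σ k : Fin (2*h), Fin (a k)) = ∑ k, a k := by
  simp [Fintype.card_sigma]

lemma nullity_S_add_one (hh : 1 ≤ h) (ha : ∀ k, 1 ≤ a k) :
    Module.finrank ℝ (LinearMap.ker (chainS h a + 1).mulVecLin) + (2*h - 1)
      = Fintype.card (Σ k : Fin (2*h), Fin (a k)) := by
  have hrange : LinearMap.range (chainS h a + 1).mulVecLin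
      = Submodule.map (liftL h a) (LinearMap.range (sigMat h).mulVecLin) := by
    rw [chainS_add_one_comp, LinearMap.range_comp, LinearMap.range_comp,
      LinearMap.range_eq_top.2 (cellSumL_surj ha), Submodule.map_top]
  have hfr1 : Module.finrank ℝ (LinearMap.range (chainS h a + 1).mulVecLin)
      = Module.finrank ℝ (LinearMap.range (sigMat h).mulVecLin) := by
    rw [hrange]
    exact (LinearEquiv.finrank_eq
      (Submodule.equivMapOfInjective (liftL h a) (liftL_inj ha) _)).symm
  have hrn1 := LinearMap.finrank_range_add_finrank_ker (sigMat h).mulVecLin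
  have hrn2 := LinearMap.finrank_range_add_finrank_ker (chainS h a + 1).mulVecLin
  rw [Module.finrank_fintype_fun_eq_card, Fintype.card_fin] at hrn1
  rw [Module.finrank_fintype_fun_eq_card] at hrn2
  rw [sig_ker_finrank hh] at hrn1
  omega

end Nullity

section QuotKer
variable {h : ℕ} {a : Fin (2*h) → ℕ}

lemma quot_row_step (μ : ℝ) (v : Fin (2*h) → ℝ)
    (hv : (quotS h a - μ • (1 : Matrix (Fin (2*h)) (Fin (2*h)) ℝ)) *ᵥ v = 0)
    (k : ℕ) (hk : k + 2 < 2*h) :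
    (1+μ) * v ⟨k+2, hk⟩ = (1+μ) * v ⟨k, by omega⟩
      - ((if k % 2 = 0 then -2 else 2) * (a ⟨k+1, by omega⟩ : ℝ)) * v ⟨k+1, by omega⟩ := by
  set c : ℝ := (if k % 2 = 0 then -2 else 2) * (a ⟨k+1, by omega⟩ : ℝ) with hc
  have hrow : ∀ (i : Fin (2*h)), ∑ l, quotS h a i l * v l = μ * v i := by
    intro i
    have := congrFun hv i
    rw [Matrix.sub_mulVec, Matrix.smul_mulVec, Matrix.one_mulVec, Pi.zero_apply,
      Pi.sub_apply, sub_eq_zero, Pi.smul_apply, smul_eq_mul] at this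
    rw [← mulVec_apply', this]
  have hterm : ∀ l : Fin (2*h), (quotS h a ⟨k, by omega⟩ l - quotS h a ⟨k+2, hk⟩ l) * v l
      = c * (if l = ⟨k+1, by omega⟩ then v l else 0)
        - (if l = ⟨k, by omega⟩ then v l else 0) + (if l = ⟨k+2, hk⟩ then v l else 0) := by
    intro l
    by_cases h1 : l = ⟨k+1, by omega⟩
    · subst h1
      rw [if_pos rfl,
        if_neg (by intro hc'; rw [Fin.ext_iff] at hc'; simp only [Fin.val_mk] at hc'; omega),
        if_neg (by intro hc'; rw [Fin.ext_iff] at hc'; simp only [Fin.val_mk] at hc'; omega),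
        quotS_eq_sig, quotS_eq_sig,
        if_neg (by intro hc'; rw [Fin.ext_iff] at hc'; simp only [Fin.val_mk] at hc'; omega),
        if_neg (by intro hc'; rw [Fin.ext_iff] at hc'; simp only [Fin.val_mk] at hc'; omega),
        sigMat_apply, sigMat_apply]
      rcases Nat.even_or_odd k with hpar | hpar
      · rw [Nat.even_iff] at hpar
        rw [if_pos ((cellAdj_succ k (by omega) (by omega)).2 hpar),
          if_neg (fun hcon => by have := (cellAdj_succ' k hk).1 hcon; omega), hc, if_pos hpar]
        ring
      · rw [Nat.odd_iff] at hpar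
        rw [if_neg (fun hcon => by have := (cellAdj_succ k (by omega) (by omega)).1 hcon; omega),
          if_pos ((cellAdj_succ' k hk).2 hpar), hc, if_neg (by omega)]
        ring
    · rw [if_neg h1, quotS_eq_sig, quotS_eq_sig]
      have hlval : (l:ℕ) ≠ k+1 := fun hcon => h1 (Fin.ext hcon)
      have hsig : sigMat h ⟨k, by omega⟩ l = sigMat h ⟨k+2, hk⟩ l := by
        rw [show l = (⟨(l:ℕ), l.isLt⟩ : Fin (2*h)) from Fin.ext rfl]
        exact sig_row_diff k (l:ℕ) hk l.isLt hlval
      rw [hsig]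
      have e2 : (if (⟨k, by omega⟩ : Fin (2*h)) = l then (1:ℝ) else 0)
          = (if l = ⟨k, by omega⟩ then (1:ℝ) else 0) := if_congr eq_comm rfl rfl
      have e3 : (if (⟨k+2, hk⟩ : Fin (2*h)) = l then (1:ℝ) else 0)
          = (if l = ⟨k+2, hk⟩ then (1:ℝ) else 0) := if_congr eq_comm rfl rfl
      rw [e2, e3]
      have hkk2 : l = ⟨k, by omega⟩ → ¬ l = ⟨k+2, hk⟩ := fun hA hB => by
        rw [hA, Fin.ext_iff] at hB
        simp only [Fin.val_mk] at hB
        omega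
      by_cases h2 : l = ⟨k, by omega⟩
      · rw [if_pos h2, if_pos h2, if_neg (hkk2 h2), if_neg (hkk2 h2)]
        ring
      · rw [if_neg h2, if_neg h2]
        by_cases h3 : l = ⟨k+2, hk⟩
        · rw [if_pos h3, if_pos h3]
          ring
        · rw [if_neg h3, if_neg h3]
          ring
  have hsum : ∑ l, (quotS h a ⟨k, by omega⟩ l - quotS h a ⟨k+2, hk⟩ l) * v l
      = c * v ⟨k+1, by omega⟩ - v ⟨k, by omega⟩ + v ⟨k+2, hk⟩ := by
    rw [Finset.sum_congr rfl fun l _ => hterm l]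
    rw [Finset.sum_add_distrib, Finset.sum_sub_distrib, ← Finset.mul_sum]
    rw [Finset.sum_ite_eq' Finset.univ (⟨k+1, by omega⟩ : Fin (2*h)) v,
      Finset.sum_ite_eq' Finset.univ (⟨k, by omega⟩ : Fin (2*h)) v,
      Finset.sum_ite_eq' Finset.univ (⟨k+2, hk⟩ : Fin (2*h)) v]
    simp
  have hdiff : ∑ l, (quotS h a ⟨k, by omega⟩ l - quotS h a ⟨k+2, hk⟩ l) * v l
      = μ * v ⟨k, by omega⟩ - μ * v ⟨k+2, hk⟩ := by
    have e1 := hrow ⟨k, by omega⟩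
    have e2 := hrow ⟨k+2, hk⟩
    have : ∀ l : Fin (2*h), (quotS h a ⟨k, by omega⟩ l - quotS h a ⟨k+2, hk⟩ l) * v l
        = quotS h a ⟨k, by omega⟩ l * v l - quotS h a ⟨k+2, hk⟩ l * v l := fun l => by ring
    rw [Finset.sum_congr rfl fun l _ => this l, Finset.sum_sub_distrib, e1, e2]
  rw [hsum] at hdiff
  linarith

lemma quot_ker_zero (hh : 1 ≤ h) (μ : ℝ) (hμ : 1 + μ ≠ 0) (v : Fin (2*h) → ℝ)
    (hv : (quotS h a - μ • (1 : Matrix (Fin (2*h)) (Fin (2*h)) ℝ)) *ᵥ v = 0)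
    (h0 : v ⟨0, by omega⟩ = 0) (h1 : v ⟨1, by omega⟩ = 0) : v = 0 := by
  have key : ∀ j, ∀ (hj : j < 2*h), v ⟨j, hj⟩ = 0 := by
    intro j
    induction j using Nat.strong_induction_on with
    | _ j ih =>
      intro hj
      rcases j with _ | j
      · exact h0
      rcases j with _ | j
      · exact h1
      have e := quot_row_step μ v hv j (by omega)
      rw [ih j (by omega) (by omega), ih (j+1) (by omega) (by omega)] at e
      have : (1+μ) * v ⟨j+2, hj⟩ = 0 := by rw [e]; ring
      rcases mul_eq_zero.1 this with hcon | hz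
      · exact absurd hcon hμ
      · exact hz
  funext l
  have := key (l:ℕ) l.isLt
  exact this

end QuotKer

section ChainNullity
variable {h : ℕ} {a : Fin (2*h) → ℕ}

lemma chain_eigen_rows (μ : ℝ) (x : (Σ k : Fin (2*h), Fin (a k)) → ℝ)
    (hx : (chainS h a - μ • (1 : Matrix _ _ ℝ)) *ᵥ x = 0)
    (u : Σ k : Fin (2*h), Fin (a k)) :
    μ * x u = (∑ w, sigMat h u.1 w.1 * x w) - x u := by
  have := congrFun hx u
  rw [Matrix.sub_mulVec, Matrix.smul_mulVec, Matrix.one_mulVec, Pi.zero_apply,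
    Pi.sub_apply, sub_eq_zero, Pi.smul_apply, smul_eq_mul] at this
  rw [← this, mulVec_apply']
  have hterm : ∀ w, chainS h a u w * x w
      = sigMat h u.1 w.1 * x w - (if w = u then x w else 0) := by
    intro w
    rw [chainS_apply]
    by_cases hw : w = u
    · rw [if_pos hw, if_pos hw.symm]
      ring
    · rw [if_neg hw, if_neg (fun hc => hw hc.symm)]
      ring
  rw [Finset.sum_congr rfl fun w _ => hterm w, Finset.sum_sub_distrib,
    Finset.sum_ite_eq' Finset.univ u x]
  simp

lemma chain_const_on_cells (μ : ℝ) (hμ : 1 + μ ≠ 0) (x : (Σ k : Fin (2*h), Fin (a k)) → ℝ)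
    (hx : (chainS h a - μ • (1 : Matrix _ _ ℝ)) *ᵥ x = 0)
    (k : Fin (2*h)) (j j' : Fin (a k)) : x ⟨k, j⟩ = x ⟨k, j'⟩ := by
  have e1 := chain_eigen_rows μ x hx ⟨k, j⟩
  have e2 := chain_eigen_rows μ x hx ⟨k, j'⟩
  have : (1+μ) * (x ⟨k, j⟩ - x ⟨k, j'⟩) = 0 := by
    have hsame : (∑ w, sigMat h (⟨k,j⟩ : Σ k : Fin (2*h), Fin (a k)).1 w.1 * x w)
        = ∑ w, sigMat h (⟨k,j'⟩ : Σ k : Fin (2*h), Fin (a k)).1 w.1 * x w := rfl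
    rw [hsame] at e1
    linarith
  rcases mul_eq_zero.1 this with hc | hz
  · exact absurd hc hμ
  · linarith

lemma chain_nullity_le_two (hh : 1 ≤ h) (ha : ∀ k, 1 ≤ a k) (μ : ℝ) (hμ : μ ≠ -1) :
    Module.finrank ℝ
      (LinearMap.ker (chainS h a - μ • (1 : Matrix _ _ ℝ)).mulVecLin) ≤ 2 := by
  have hμ' : 1 + μ ≠ 0 := fun hc => hμ (by linarith)
  set K := LinearMap.ker (chainS h a - μ • (1 : Matrix _ _ ℝ)).mulVecLin with hK
  let φ : K →ₗ[ℝ] (Fin 2 → ℝ) :=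
    { toFun := fun x => fun i => x.1 ⟨⟨(i:ℕ), by omega⟩, ⟨0, ha _⟩⟩
      map_add' := fun x y => rfl
      map_smul' := fun c x => rfl }
  have hinj : Function.Injective φ := by
    rw [← LinearMap.ker_eq_bot]
    rw [Submodule.eq_bot_iff]
    rintro ⟨x, hxK⟩ hx0
    have hx : (chainS h a - μ • (1 : Matrix _ _ ℝ)) *ᵥ x = 0 := hxK
    -- y on cells
    set y : Fin (2*h) → ℝ := fun k => x ⟨k, ⟨0, ha k⟩⟩ with hy
    have hcellsum : ∀ l : Fin (2*h), ∑ j : Fin (a l), x ⟨l, j⟩ = (a l : ℝ) * y l := by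
      intro l
      have : ∀ j : Fin (a l), x ⟨l, j⟩ = y l := fun j =>
        chain_const_on_cells μ hμ' x hx l j ⟨0, ha l⟩
      rw [Finset.sum_congr rfl fun j _ => this j, Finset.sum_const, Finset.card_univ,
        Fintype.card_fin, nsmul_eq_mul]
    have hyrow : (quotS h a - μ • (1 : Matrix (Fin (2*h)) (Fin (2*h)) ℝ)) *ᵥ y = 0 := by
      funext k
      rw [Matrix.sub_mulVec, Matrix.smul_mulVec, Matrix.one_mulVec, Pi.sub_apply,
        Pi.smul_apply, smul_eq_mul, Pi.zero_apply, sub_eq_zero, mulVec_apply']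
      have hq : ∀ l, quotS h a k l * y l
          = sigMat h k l * ((a l : ℝ) * y l) - (if l = k then y l else 0) := by
        intro l
        rw [quotS_eq_sig]
        by_cases hlk : l = k
        · rw [if_pos hlk, if_pos hlk.symm]
          ring
        · rw [if_neg hlk, if_neg (fun hc => hlk hc.symm)]
          ring
      rw [Finset.sum_congr rfl fun l _ => hq l, Finset.sum_sub_distrib,
        Finset.sum_ite_eq' Finset.univ k y, if_pos (Finset.mem_univ k)]
      have hback : ∑ l, sigMat h k l * ((a l : ℝ) * y l)
          = ∑ w : Σ k : Fin (2*h), Fin (a k), sigMat h k w.1 * x w := by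
        rw [← Finset.univ_sigma_univ, Finset.sum_sigma]
        refine Finset.sum_congr rfl fun l _ => ?_
        rw [← hcellsum l, Finset.mul_sum]
      rw [hback]
      have := chain_eigen_rows μ x hx ⟨k, ⟨0, ha k⟩⟩
      have hyk : x ⟨k, ⟨0, ha k⟩⟩ = y k := rfl
      rw [hyk] at this
      linarith [this]
    have hy0 : y ⟨0, by omega⟩ = 0 := congrFun hx0 0
    have hy1 : y ⟨1, by omega⟩ = 0 := congrFun hx0 1
    have hyz : y = 0 := quot_ker_zero hh μ hμ' y hyrow hy0 hy1
    apply Subtype.ext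
    funext u
    obtain ⟨k, j⟩ := u
    have hxy : x ⟨k, j⟩ = y k := chain_const_on_cells μ hμ' x hx k j ⟨0, ha k⟩
    show x ⟨k, j⟩ = 0
    rw [hxy, hyz]
    rfl
  have := LinearMap.finrank_le_finrank_of_injective hinj
  rwa [Module.finrank_fintype_fun_eq_card, Fintype.card_fin] at this

end ChainNullity

theorem chain_seidel_number_of_distinct_eigenvalues
    (h : ℕ) (hh : 1 ≤ h) (a : Fin (2 * h) → ℕ) (ha : ∀ k, 1 ≤ a k) :
    h + 1 ≤ (chainS h a).charpoly.roots.toFinset.card ∧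
      (chainS h a).charpoly.roots.toFinset.card ≤ 2 * h := by
  have hS : (chainS h a).IsHermitian := chainS_isHermitian a
  have htf : (chainS h a).charpoly.roots.toFinset
      = Finset.image hS.eigenvalues Finset.univ := by
    rw [my_roots_charpoly hS, Multiset.toFinset_map, Finset.val_toFinset]
  set img := Finset.image hS.eigenvalues Finset.univ with himg
  set cnt : ℝ → ℕ := fun μ => (Finset.univ.filter fun i => hS.eigenvalues i = μ).card with hcnt
  have hcnt_eq : ∀ μ : ℝ, cnt μ = Module.finrank ℝ
      (LinearMap.ker (chainS h a - μ • (1 : Matrix _ _ ℝ)).mulVecLin) :=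
    fun μ => count_eq_nullity hS μ
  set n := Fintype.card (Σ k : Fin (2*h), Fin (a k)) with hn
  have hneg : cnt (-1) + (2*h-1) = n := by
    rw [hcnt_eq, show chainS h a - (-1:ℝ) • (1 : Matrix _ _ ℝ) = chainS h a + 1 by
      rw [neg_smul, one_smul, sub_neg_eq_add]]
    exact nullity_S_add_one hh ha
  have hcardge : 2*h ≤ n := by
    rw [hn, card_V]
    calc 2*h = ∑ _k : Fin (2*h), 1 := by simp
      _ ≤ ∑ k, a k := Finset.sum_le_sum fun k _ => ha k
  have hmem : (-1:ℝ) ∈ img := by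
    have hpos : 0 < cnt (-1) := by omega
    obtain ⟨i, hi⟩ := Finset.card_pos.1 hpos
    exact Finset.mem_image.2 ⟨i, Finset.mem_univ i, (Finset.mem_filter.1 hi).2⟩
  have hbound : ∀ μ ∈ img.erase (-1), 1 ≤ cnt μ ∧ cnt μ ≤ 2 := by
    intro μ hμ
    have hne : μ ≠ -1 := Finset.ne_of_mem_erase hμ
    have hmem' : μ ∈ img := Finset.mem_of_mem_erase hμ
    constructor
    · obtain ⟨i, _, hi⟩ := Finset.mem_image.1 hmem'
      refine Finset.card_pos.2 ⟨i, Finset.mem_filter.2 ⟨Finset.mem_univ i, hi⟩⟩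
    · rw [hcnt_eq]
      exact chain_nullity_le_two hh ha μ hne
  have htotal : ∑ μ ∈ img, cnt μ = n := by
    rw [hn, ← Finset.card_univ, Finset.card_eq_sum_card_image hS.eigenvalues Finset.univ]
  have hsplit : cnt (-1) + ∑ μ ∈ img.erase (-1), cnt μ = ∑ μ ∈ img, cnt μ :=
    Finset.add_sum_erase img cnt hmem
  have hsum_le : ∑ μ ∈ img.erase (-1), cnt μ ≤ (img.erase (-1)).card * 2 := by
    have := Finset.sum_le_card_nsmul (img.erase (-1)) cnt 2 fun x hx => (hbound x hx).2
    simpa [smul_eq_mul] using this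
  have hsum_ge : (img.erase (-1)).card * 1 ≤ ∑ μ ∈ img.erase (-1), cnt μ := by
    have := Finset.card_nsmul_le_sum (img.erase (-1)) cnt 1 fun x hx => (hbound x hx).1
    simpa [smul_eq_mul] using this
  have himgcard : (img.erase (-1)).card + 1 = img.card := Finset.card_erase_add_one hmem
  rw [htf]
  constructor
  · omega
  · omega
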